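/- Fix a positive integer d and v ∈ I(d). An element w of I(d,2d) with w ≥ v belongs to I(d) if and only if the corresponding distinguished subset 𝔖_w of N(v) is symmetric and contains an even number of elements of the diagonal D(v). -/

import Mathlib

namespace OG

/-- `star d k = k* = 2d+1-k`. -/
def star (d k : ℕ) : ℕ := 2 * d + 1 - k

/-- `I(d,2d)`: the set of `d`-element subsets of `{1,…,2d}`. -/
def Idn (d : ℕ) : Set (Finset ℕ) :=
  {v | v.card = d ∧ ∀ k ∈ v, 1 ≤ k ∧ k ≤ 2 * d}

/-- The partial order on `I(d,2d)`: entrywise comparison of increasing enumerations. -/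
def leI (x y : Finset ℕ) : Prop :=
  List.Forall₂ (· ≤ ·) (x.sort (· ≤ ·)) (y.sort (· ≤ ·))

/-- `I(d)`: elements of `I(d,2d)` containing exactly one of `k`, `k*` for each `k`,
with evenly many entries exceeding `d`. -/
def Iset (d : ℕ) : Set (Finset ℕ) :=
  {v | v ∈ Idn d ∧ (∀ k, 1 ≤ k → k ≤ 2 * d → (k ∈ v ↔ star d k ∉ v)) ∧
       Even ((v.filter (fun k => d < k)).card)}

/-- membership in `N(v)`. -/
def inN (d : ℕ) (v : Finset ℕ) (p : ℕ × ℕ) : Prop :=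
  1 ≤ p.1 ∧ p.1 ≤ 2 * d ∧ 1 ≤ p.2 ∧ p.2 ≤ 2 * d ∧ p.1 ∉ v ∧ p.2 ∈ v ∧ p.2 < p.1

/-- membership in `OR(v)`. -/
def inOR (d : ℕ) (v : Finset ℕ) (p : ℕ × ℕ) : Prop :=
  1 ≤ p.1 ∧ p.1 ≤ 2 * d ∧ 1 ≤ p.2 ∧ p.2 ≤ 2 * d ∧ p.1 ∉ v ∧ p.2 ∈ v ∧ p.1 < star d p.2

/-- membership in `ON(v) = OR(v) ∩ N(v)`. -/
def inON (d : ℕ) (v : Finset ℕ) (p : ℕ × ℕ) : Prop := inN d v p ∧ inOR d v p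

/-- membership in the diagonal `D(v)`. -/
def inDiag (d : ℕ) (v : Finset ℕ) (p : ℕ × ℕ) : Prop :=
  p.1 ∉ v ∧ p.2 ∈ v ∧ p.1 = star d p.2

instance (d : ℕ) (v : Finset ℕ) : DecidablePred (inN d v) := fun p => by
  unfold inN; infer_instance

instance (d : ℕ) (v : Finset ℕ) : DecidablePred (inOR d v) := fun p => by
  unfold inOR; infer_instance

instance (d : ℕ) (v : Finset ℕ) : DecidablePred (inON d v) := fun p => by
  unfold inON; infer_instance

instance (d : ℕ) (v : Finset ℕ) : DecidablePred (inDiag d v) := fun p => by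
  unfold inDiag; infer_instance

/-- `(R,C) > (r,c)` iff `R > r` and `C < c`. -/
def pgt (A B : ℕ × ℕ) : Prop := B.1 < A.1 ∧ A.2 < B.2

instance : DecidableRel pgt := fun A B => by unfold pgt; infer_instance

/-- `(R,C)` dominates `(r,c)` iff `R ≥ r` and `C ≤ c`. -/
def pdom (A B : ℕ × ℕ) : Prop := B.1 ≤ A.1 ∧ A.2 ≤ B.2

/-- vertical projection `p_v(r,c) = (c*,c)`. -/
def pv (d : ℕ) (α : ℕ × ℕ) : ℕ × ℕ := (star d α.2, α.2)

/-- horizontal projection `p_h(r,c) = (r,r*)`. -/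
def ph (d : ℕ) (α : ℕ × ℕ) : ℕ × ℕ := (α.1, star d α.1)

/-- `(r,c)^# = (c*,r*)`. -/
def hash (d : ℕ) (α : ℕ × ℕ) : ℕ × ℕ := (star d α.2, star d α.1)

/-- A `v`-chain: a strictly decreasing (under `pgt`) list of elements of `ON(v)`. -/
def IsVChain (d : ℕ) (v : Finset ℕ) (C : List (ℕ × ℕ)) : Prop :=
  C.Chain' pgt ∧ ∀ α ∈ C, inON d v α

/-- Two consecutive elements `(r,c) > (R,C)` of a `v`-chain are connected
if `r* ≥ C` and `R > r*`. -/
def Connected (d : ℕ) (α β : ℕ × ℕ) : Prop :=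
  β.2 ≤ star d α.1 ∧ star d α.1 < β.1

instance (d : ℕ) : ∀ α β, Decidable (Connected d α β) := fun α β => by
  unfold Connected; infer_instance

/-- The connected components of a `v`-chain. -/
def components (d : ℕ) (C : List (ℕ × ℕ)) : List (List (ℕ × ℕ)) :=
  C.splitBy (fun a b => decide (Connected d a b))

/-- The three possible types of an element of a `v`-chain. -/
inductive VType | V | H | S
deriving DecidableEq

/-- The type of an element `α` of a `v`-chain `C`: type V if `α` is not the last element
of its connected component or that component has even cardinality; otherwise type H if
`p_h(α) ∈ N(v)` (i.e. `r > r*`) and type S if not. -/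
def typeOf (d : ℕ) (C : List (ℕ × ℕ)) (α : ℕ × ℕ) : VType :=
  match (components d C).find? (fun g => decide (α ∈ g)) with
  | some g =>
      if g.getLast? = some α ∧ Odd g.length then
        (if star d α.1 < α.1 then VType.H else VType.S)
      else VType.V
  | none => VType.V

/-- `𝔖_{C,α}`. -/
def SCa (d : ℕ) (C : List (ℕ × ℕ)) (α : ℕ × ℕ) : Multiset (ℕ × ℕ) :=
  match typeOf d C α with
  | VType.V => {pv d α}
  | VType.H => {pv d α, ph d α}
  | VType.S => {α, hash d α}

/-- `𝔖_C`: the multiset union of the `𝔖_{C,α}` over `α ∈ C`. -/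
def SC (d : ℕ) (C : List (ℕ × ℕ)) : Multiset (ℕ × ℕ) :=
  (C.map (fun α => SCa d C α)).sum

/-- `q_{C,α}`. -/
def qCa (d : ℕ) (C : List (ℕ × ℕ)) (α : ℕ × ℕ) : ℕ × ℕ :=
  match typeOf d C α with
  | VType.S => α
  | _ => pv d α

/-- A strictly decreasing chain of elements of the monomial `S`. -/
def IsChainIn (S : Multiset (ℕ × ℕ)) (L : List (ℕ × ℕ)) : Prop :=
  L.Chain' pgt ∧ ∀ β ∈ L, β ∈ S

/-- The depth of `α` in a monomial `S` of `N(v)`: the maximal length of a strictly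
decreasing chain of elements of `S` ending at `α`. -/
noncomputable def depth (S : Multiset (ℕ × ℕ)) (α : ℕ × ℕ) : ℕ :=
  sSup {k | ∃ L, IsChainIn S L ∧ L.getLast? = some α ∧ L.length = k}

/-- The o-depth of `α` in a `v`-chain `C`: the depth of `q_{C,α}` in `𝔖_C`. -/
noncomputable def odepthC (d : ℕ) (C : List (ℕ × ℕ)) (α : ℕ × ℕ) : ℕ :=
  depth (SC d C) (qCa d C α)

/-- The o-depth of `α` in a monomial `S` of `ON(v)`: the maximum of `odepthC` over
all `v`-chains in `S` containing `α`. -/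
noncomputable def odepthM (d : ℕ) (v : Finset ℕ) (S : Multiset (ℕ × ℕ)) (α : ℕ × ℕ) : ℕ :=
  sSup {k | ∃ C, IsVChain d v C ∧ (∀ β ∈ C, β ∈ S) ∧ α ∈ C ∧ odepthC d C α = k}

/-- A distinguished subset of `N(v)`. -/
def Distinguished (d : ℕ) (v : Finset ℕ) (S : Finset (ℕ × ℕ)) : Prop :=
  (∀ p ∈ S, inN d v p) ∧
  ∀ A ∈ S, ∀ B ∈ S, A ≠ B →
    A.1 ≠ B.1 ∧ A.2 ≠ B.2 ∧ (B.1 < A.1 → (B.1 < A.2 ∨ A.2 < B.2))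

/-- The element of `I(d,2d)` attached to a distinguished subset `S` of `N(v)`:
remove from `v` the column indices of elements of `S` and add their row indices. -/
def toW (v : Finset ℕ) (S : Finset (ℕ × ℕ)) : Finset ℕ :=
  (v \ S.image Prod.snd) ∪ S.image Prod.fst

/-- `w(C) = w_C`, the element of `I(d,2d)` attached to the `v`-chain `C` via the
distinguished subset `𝔖_C`. -/
def wC (d : ℕ) (v : Finset ℕ) (C : List (ℕ × ℕ)) : Finset ℕ :=
  toW v (SC d C).toFinset

/-- `w` ortho-dominates a monomial `S` in `ON(v)`: `w ≥ w(C)` for every `v`-chain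
`C` contained in `S`. -/
def ODominates (d : ℕ) (v w : Finset ℕ) (S : Multiset (ℕ × ℕ)) : Prop :=
  ∀ C : List (ℕ × ℕ), IsVChain d v C → (∀ β ∈ C, β ∈ S) → leI (wC d v C) w

/-- `x` dominates a monomial `S` in `N(v)` (in the sense of the Grassmannian case):
`x ≥ w_L` for every strictly decreasing chain `L` contained in `S`. -/
def Dominates (d : ℕ) (v x : Finset ℕ) (S : Multiset (ℕ × ℕ)) : Prop :=
  ∀ L : List (ℕ × ℕ), L.Chain' pgt → (∀ β ∈ L, β ∈ S) → leI (toW v L.toFinset) x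

/-- The `v`-degree of `θ`: half the cardinality of `v \ θ`. -/
def vdeg (v θ : Finset ℕ) : ℕ := (v \ θ).card / 2

/-- the element next to `α` in the list `C`. -/
def nextInC (C : List (ℕ × ℕ)) (α : ℕ × ℕ) : Option (ℕ × ℕ) :=
  C[C.idxOf α + 1]?

/-- The critical element of a `v`-chain: its first element whose horizontal projection
does not belong to `N(v)` (i.e. with `r ≤ r*`). -/
def critical (d : ℕ) (C : List (ℕ × ℕ)) : Option (ℕ × ℕ) :=
  C.find? (fun x => decide (x.1 ≤ star d x.1))

/-- `α` is the last element of its connected component in `C`. -/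
def isCompLast (d : ℕ) (C : List (ℕ × ℕ)) (α : ℕ × ℕ) : Prop :=
  ∃ g ∈ components d C, g.getLast? = some α

/-- The condition (*): `α` has type H in `C` and `p_h(α) ≯ β'` for some `β' ∈ 𝔖_{C,β}`. -/
def starCond (d : ℕ) (C : List (ℕ × ℕ)) (α β : ℕ × ℕ) : Prop :=
  typeOf d C α = VType.H ∧ ∃ β' ∈ SCa d C β, ¬ pgt (ph d α) β'

/-- A standard monomial in `I(d)`: a weakly decreasing sequence of elements of `I(d)`. -/
def IsStdMon (d : ℕ) (L : List (Finset ℕ)) : Prop :=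
  (∀ θ ∈ L, θ ∈ Iset d) ∧ L.Chain' (fun a b => leI b a)

/-- A standard monomial is `w`-dominated if `w ≥ θ₁`. -/
def WDominated (w : Finset ℕ) (L : List (Finset ℕ)) : Prop :=
  ∀ θ, L.head? = some θ → leI θ w

/-- A standard monomial is `v`-compatible if each member is comparable with `v`
and distinct from `v`. -/
def VCompatible (v : Finset ℕ) (L : List (Finset ℕ)) : Prop :=
  ∀ θ ∈ L, θ ≠ v ∧ (leI θ v ∨ leI v θ)

/-- The degree of a standard monomial: the sum of the `v`-degrees of its members. -/
def stdDeg (v : Finset ℕ) (L : List (Finset ℕ)) : ℕ :=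
  (L.map (fun θ => vdeg v θ)).sum

end OG

/-! A distinguished subset of `N(v)` is determined by its sets of rows and of columns: its element
with the smallest row `r` has as column the largest column below `r`, and one inducts after removing
it. Since `v ∈ I(d)`, the involution `#` preserves distinguished subsets of `N(v)`, so `𝔖_w` is
symmetric iff its rows are the `*`-images of its columns, which is exactly the condition that `w`
contains one of `k`, `k*` for each `k`. Under this condition `*` exchanges entries `≤ d` and `> d`,
so the number of entries of `w` exceeding `d` has the parity of that of `v` plus `|𝔖_w|`; and
`|𝔖_w|` has the parity of the number of fixed points of `#`, which are the diagonal elements. -/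

namespace OG

open Finset

lemma image_erase_of_injOn {α β : Type*} [DecidableEq α] [DecidableEq β] {f : α → β}
    {s : Finset α} (hf : Set.InjOn f s) {a : α} (ha : a ∈ s) :
    (s.erase a).image f = (s.image f).erase (f a) := by
  rw [← sdiff_singleton_eq_erase, image_sdiff_of_injOn hf (singleton_subset_iff.2 ha),
    image_singleton, sdiff_singleton_eq_erase]

lemma even_card_iff_of_involution {α : Type*} [DecidableEq α] {s : Finset α} (g : α → α)
    (hmem : ∀ a ∈ s, g a ∈ s) (hinv : ∀ a ∈ s, g (g a) = a) :
    Even s.card ↔ Even (s.filter (fun a => g a = a)).card := by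
  have hmoved : Even (s.filter (fun a => ¬ g a = a)).card := by
    have hsum : ∑ _a ∈ s.filter (fun a => ¬ g a = a), (1 : ZMod 2) = 0 :=
      sum_involution (fun a _ => g a) (fun _ _ => rfl) (fun a ha _ => (mem_filter.1 ha).2)
        (fun a ha => mem_filter.2 ⟨hmem a (mem_filter.1 ha).1, fun h =>
          (mem_filter.1 ha).2 (by rw [hinv a (mem_filter.1 ha).1] at h; exact h.symm)⟩)
        (fun a ha => hinv a (mem_filter.1 ha).1)
    simpa [ZMod.natCast_eq_zero_iff_even] using hsum
  rw [← card_filter_add_card_filter_not (fun a => g a = a), Nat.even_add, iff_true_intro hmoved,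
    iff_true]

variable {d : ℕ} {v : Finset ℕ} {S T : Finset (ℕ × ℕ)} {k : ℕ}

lemma star_star (hk : k ≤ 2 * d) : star d (star d k) = k := by
  unfold star; omega

lemma star_injOn : Set.InjOn (star d) {k | k ≤ 2 * d} :=
  fun a (ha : a ≤ 2 * d) b (hb : b ≤ 2 * d) h => by unfold star at h; omega

lemma lt_star_iff : d < star d k ↔ k ≤ d := by
  unfold star; omega

lemma star_mem_iff (hv : v ∈ Iset d) (hk1 : 1 ≤ k) (hk2 : k ≤ 2 * d) : star d k ∈ v ↔ k ∉ v := by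
  have := hv.2.1 k hk1 hk2
  tauto

lemma hash_hash {p : ℕ × ℕ} (hp : inN d v p) : hash d (hash d p) = p :=
  Prod.ext (star_star hp.2.1) (star_star hp.2.2.2.1)

lemma inN_hash (hv : v ∈ Iset d) {p : ℕ × ℕ} (hp : inN d v p) : inN d v (hash d p) := by
  obtain ⟨h1, h2, h3, h4, h5, h6, h7⟩ := hp
  refine ⟨?_, ?_, ?_, ?_, (hv.2.1 p.2 h3 h4).1 h6, (star_mem_iff hv h1 h2).2 h5, ?_⟩ <;>
    simp only [hash, star] <;> omega

lemma inDiag_iff_hash_eq {p : ℕ × ℕ} (hp : inN d v p) : inDiag d v p ↔ hash d p = p := by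
  obtain ⟨h1, h2, h3, h4, h5, h6, h7⟩ := hp
  simp only [inDiag, hash, Prod.ext_iff, h5, h6, not_false_eq_true, true_and, star]
  omega

namespace Distinguished

lemma mono (hS : Distinguished d v S) (hT : T ⊆ S) : Distinguished d v T :=
  ⟨fun p hp => hS.1 p (hT hp), fun A hA B hB => hS.2 A (hT hA) B (hT hB)⟩

lemma injOn_fst (hS : Distinguished d v S) : Set.InjOn Prod.fst (S : Set (ℕ × ℕ)) :=
  fun p hp q hq h => by_contra fun hpq => (hS.2 p hp q hq hpq).1 h

lemma injOn_snd (hS : Distinguished d v S) : Set.InjOn Prod.snd (S : Set (ℕ × ℕ)) :=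
  fun p hp q hq h => by_contra fun hpq => (hS.2 p hp q hq hpq).2.1 h

lemma notMem_image_fst (hS : Distinguished d v S) (hk : k ∈ v) : k ∉ S.image Prod.fst :=
  fun h => by
    obtain ⟨p, hp, rfl⟩ := mem_image.1 h
    exact (hS.1 p hp).2.2.2.2.1 hk

lemma coe_image_snd_subset (hS : Distinguished d v S) :
    (S.image Prod.snd : Set ℕ) ⊆ {k | k ≤ 2 * d} := fun c hc => by
  obtain ⟨p, hp, rfl⟩ := mem_image.1 (mem_coe.1 hc)
  exact (hS.1 p hp).2.2.2.1

lemma le_snd_of_forall_fst_le {p : ℕ × ℕ} (hS : Distinguished d v S) (hp : p ∈ S)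
    (hmin : ∀ q ∈ S, p.1 ≤ q.1) {c : ℕ} (hc : c ∈ S.image Prod.snd) (hcp : c < p.1) :
    c ≤ p.2 := by
  obtain ⟨q, hq, rfl⟩ := mem_image.1 hc
  obtain rfl | hqp := eq_or_ne q p
  · exact le_rfl
  have := hS.2 q hq p hp hqp
  have := hmin q hq
  omega

theorem eq_of_image_fst_eq_of_image_snd_eq (hS : Distinguished d v S) (hT : Distinguished d v T)
    (hfst : S.image Prod.fst = T.image Prod.fst) (hsnd : S.image Prod.snd = T.image Prod.snd) :
    S = T := by
  induction S using Finset.strongInduction generalizing T with | H S ih => ?_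
  obtain rfl | hne := S.eq_empty_or_nonempty
  · simpa [eq_comm] using hfst
  obtain ⟨p, hp, hpmin⟩ := S.exists_min_image Prod.fst hne
  obtain ⟨q, hq, hqp⟩ : ∃ q ∈ T, q.1 = p.1 := by
    simpa [hfst] using mem_image_of_mem Prod.fst hp
  have hqmin : ∀ z ∈ T, q.1 ≤ z.1 := fun z hz => by
    obtain ⟨y, hy, hyz⟩ : ∃ y ∈ S, y.1 = z.1 := by
      simpa [← hfst] using mem_image_of_mem Prod.fst hz
    rw [hqp, ← hyz]
    exact hpmin y hy
  have hpq : p = q := by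
    refine Prod.ext hqp.symm (le_antisymm ?_ ?_)
    · exact hT.le_snd_of_forall_fst_le hq hqmin (hsnd ▸ mem_image_of_mem _ hp)
        (hqp ▸ (hS.1 p hp).2.2.2.2.2.2)
    · exact hS.le_snd_of_forall_fst_le hp hpmin (hsnd ▸ mem_image_of_mem _ hq)
        (hqp ▸ (hT.1 q hq).2.2.2.2.2.2)
  subst hpq
  have herase : S.erase p = T.erase p :=
    ih _ (erase_ssubset hp) (hS.mono (erase_subset _ _)) (hT.mono (erase_subset _ _))
      (by rw [image_erase_of_injOn hS.injOn_fst hp, image_erase_of_injOn hT.injOn_fst hq, hfst])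
      (by rw [image_erase_of_injOn hS.injOn_snd hp, image_erase_of_injOn hT.injOn_snd hq, hsnd])
  rw [← insert_erase hp, ← insert_erase hq, herase]

lemma image_hash (hv : v ∈ Iset d) (hS : Distinguished d v S) :
    Distinguished d v (S.image (hash d)) := by
  refine ⟨fun A hA => ?_, fun A hA B hB hAB => ?_⟩
  · obtain ⟨p, hp, rfl⟩ := mem_image.1 hA
    exact inN_hash hv (hS.1 p hp)
  obtain ⟨p, hp, rfl⟩ := mem_image.1 hA
  obtain ⟨q, hq, rfl⟩ := mem_image.1 hB
  have hpq : p ≠ q := by rintro rfl; exact hAB rfl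
  have := hS.1 p hp
  have := hS.1 q hq
  have := hS.2 p hp q hq hpq
  have := hS.2 q hq p hp hpq.symm
  simp only [inN, hash, star] at *
  omega

end Distinguished

lemma image_hash_eq_self_iff (hv : v ∈ Iset d) (hS : Distinguished d v S) :
    S.image (hash d) = S ↔ S.image Prod.fst = (S.image Prod.snd).image (star d) := by
  have hfst : (S.image (hash d)).image Prod.fst = (S.image Prod.snd).image (star d) := by
    simp only [image_image]; rfl
  have hsnd : (S.image (hash d)).image Prod.snd = (S.image Prod.fst).image (star d) := by
    simp only [image_image]; rfl
  refine ⟨fun h => by rw [← hfst, h], fun h => ?_⟩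
  refine (hS.image_hash hv).eq_of_image_fst_eq_of_image_snd_eq hS (hfst.trans h.symm) ?_
  rw [hsnd, h, image_image]
  exact (image_congr fun c hc => star_star (hS.coe_image_snd_subset hc)).trans image_id

lemma mem_toW_of_mem (hS : Distinguished d v S) (hk : k ∈ v) :
    k ∈ toW v S ↔ k ∉ S.image Prod.snd := by
  simp [toW, hk, hS.notMem_image_fst hk]

lemma mem_toW_of_notMem (hk : k ∉ v) : k ∈ toW v S ↔ k ∈ S.image Prod.fst := by
  simp [toW, hk]

lemma forall_mem_toW_iff_star_notMem_iff (hv : v ∈ Iset d) (hS : Distinguished d v S) :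
    (∀ k, 1 ≤ k → k ≤ 2 * d → (k ∈ toW v S ↔ star d k ∉ toW v S)) ↔
      S.image Prod.fst = (S.image Prod.snd).image (star d) := by
  refine ⟨fun h => ?_, fun h => ?_⟩
  · ext r
    constructor
    · intro hr
      obtain ⟨p, hp, rfl⟩ := mem_image.1 hr
      obtain ⟨h1, h2, -, -, h5, -, -⟩ := hS.1 p hp
      have hcol := (h p.1 h1 h2).1 ((mem_toW_of_notMem h5).2 hr)
      rw [mem_toW_of_mem hS ((star_mem_iff hv h1 h2).2 h5), not_not] at hcol
      exact mem_image.2 ⟨_, hcol, star_star h2⟩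
    · intro hr
      obtain ⟨c, hc, rfl⟩ := mem_image.1 hr
      obtain ⟨p, hp, rfl⟩ := mem_image.1 hc
      obtain ⟨-, -, h3, h4, -, h6, -⟩ := hS.1 p hp
      have hstar := (h p.2 h3 h4).not_left.1 (by rwa [mem_toW_of_mem hS h6, not_not])
      rwa [mem_toW_of_notMem ((hv.2.1 p.2 h3 h4).1 h6)] at hstar
  · have hv_case : ∀ k ∈ v, (k ∈ toW v S ↔ star d k ∉ toW v S) := by
      intro k hk
      obtain ⟨hk1, hk2⟩ := hv.1.2 k hk
      rw [mem_toW_of_mem hS hk, mem_toW_of_notMem ((hv.2.1 k hk1 hk2).1 hk), h,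
        not_iff_not]
      exact_mod_cast (star_injOn.mem_image_iff hS.coe_image_snd_subset hk2).symm
    intro k hk1 hk2
    by_cases hk : k ∈ v
    · exact hv_case k hk
    · have := hv_case (star d k) ((star_mem_iff hv hk1 hk2).2 hk)
      rw [star_star hk2] at this
      tauto

lemma card_filter_toW_add (hS : Distinguished d v S) (P : ℕ → Prop) [DecidablePred P] :
    ((toW v S).filter P).card + ((S.image Prod.snd).filter P).card =
      (v.filter P).card + ((S.image Prod.fst).filter P).card := by
  have hcols : S.image Prod.snd ⊆ v := fun c hc => by
    obtain ⟨p, hp, rfl⟩ := mem_image.1 hc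
    exact (hS.1 p hp).2.2.2.2.2.1
  have hrows : Disjoint (v \ S.image Prod.snd) (S.image Prod.fst) :=
    disjoint_left.2 fun k hk => hS.notMem_image_fst (mem_sdiff.1 hk).1
  rw [toW, filter_union, card_union_of_disjoint (disjoint_filter_filter hrows), add_right_comm,
    ← card_union_of_disjoint (disjoint_filter_filter sdiff_disjoint), ← filter_union,
    sdiff_union_of_subset hcols]

lemma card_filter_lt_image_star {X : Finset ℕ} (hX : (X : Set ℕ) ⊆ {k | k ≤ 2 * d}) :
    ((X.image (star d)).filter (d < ·)).card = (X.filter (¬ d < ·)).card := by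
  rw [filter_image, card_image_of_injOn (star_injOn.mono fun k hk => hX (filter_subset _ _ hk))]
  exact congrArg card (filter_congr fun k _ => by rw [lt_star_iff, not_lt])

lemma even_card_filter_toW_iff (hv : v ∈ Iset d) (hS : Distinguished d v S)
    (hrows : S.image Prod.fst = (S.image Prod.snd).image (star d)) :
    Even ((toW v S).filter (d < ·)).card ↔ Even S.card := by
  have hsum := card_filter_toW_add hS (d < ·)
  rw [hrows, card_filter_lt_image_star hS.coe_image_snd_subset] at hsum
  have hsplit := card_filter_add_card_filter_not (s := S.image Prod.snd) (d < ·)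
  rw [card_image_of_injOn hS.injOn_snd] at hsplit
  have hveven := Nat.even_iff.1 hv.2.2
  rw [Nat.even_iff, Nat.even_iff]
  omega

lemma even_card_filter_toW_iff_even_card_filter_inDiag (hv : v ∈ Iset d)
    (hS : Distinguished d v S) (hsym : S.image (hash d) = S) :
    Even ((toW v S).filter (d < ·)).card ↔ Even (S.filter (inDiag d v)).card := by
  rw [even_card_filter_toW_iff hv hS ((image_hash_eq_self_iff hv hS).1 hsym),
    even_card_iff_of_involution (hash d) (fun p hp => hsym ▸ mem_image_of_mem _ hp)
      (fun p hp => hash_hash (hS.1 p hp)),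
    filter_congr fun p hp => (inDiag_iff_hash_eq (hS.1 p hp)).symm]

end OG

open OG in
theorem stmt2_general (d : ℕ) (v : Finset ℕ) (hv : v ∈ Iset d)
    (w : Finset ℕ) (hw : w ∈ Idn d)
    (S : Finset (ℕ × ℕ)) (hdist : Distinguished d v S) (hSw : toW v S = w) :
    w ∈ Iset d ↔ (S.image (hash d) = S ∧ Even ((S.filter (inDiag d v)).card)) := by
  subst hSw
  rw [Iset, Set.mem_ofPred_eq, and_iff_right hw, forall_mem_toW_iff_star_notMem_iff hv hdist,
    ← image_hash_eq_self_iff hv hdist]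
  exact and_congr_right (even_card_filter_toW_iff_even_card_filter_inDiag hv hdist)

open OG in
/-- `w ≥ v` in `I(d,2d)` belongs to `I(d)` iff the distinguished subset
`𝔖_w` of `N(v)` is symmetric and contains evenly many diagonal elements. -/
theorem stmt2 (d : ℕ) (hd : 0 < d) (v : Finset ℕ) (hv : v ∈ Iset d)
    (w : Finset ℕ) (hw : w ∈ Idn d) (hvw : leI v w)
    (S : Finset (ℕ × ℕ)) (hdist : Distinguished d v S) (hSw : toW v S = w) :
    w ∈ Iset d ↔ (S.image (hash d) = S ∧ Even ((S.filter (inDiag d v)).card)) :=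
  stmt2_general d v hv w hw S hdist hSw
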